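/- arXiv:2008.04362 — 3 statements merged into one kernel-verified Lean document; each statement's English description precedes it below -/
import Mathlib

section
/- For every finite p > 2, the family C_{1,p} fails condition (B3): there exist n ∈ ℕ, θ ∈ (0, π/2), and the incoherent Kraus operators K_1 = (sin θ) I_n ⊕ [0], K_2 = (cos θ) I_n ⊕ [1] ∈ M_{n+1}(ℂ) such that, for ρ = J_{n+1}/(n+1), with p_j = tr(K_j ρ K_j†) and ρ_j = K_j ρ K_j†/p_j, one has Σ_{j=1}^2 p_j C_{1,p}(ρ_j) > C_{1,p}(ρ). -/
/-!
For a real vector `y ≥ 0`, subtracting a diagonal matrix from `y yᵀ` only changes its diagonal,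
so the diagonal of `y yᵀ` is a closest incoherent state in every `ℓ_{q,p}` norm and
`C_{1,p}(y yᵀ) = ∑ⱼ yⱼ (∑_{i ≠ j} yᵢ^p)^{1/p}` for unit `y`. The state `J_{n+1}/(n+1)` and both
outcomes of the diagonal Kraus pair are of this form, and with `cos θ = 1/√n` the failure of (B3)
becomes `(n+1) n^{1/p} < (n-1)^{1+1/p} + √n + n^{1/p}/√n`. Since `(n-1)^{1/p} ≥ (1 - 1/n) n^{1/p}`,
this holds as soon as `√n ≥ 3 n^{1/p}`, which is true for large `n` exactly because `p > 2`.
-/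

open scoped ENNReal ComplexOrder
open Matrix

noncomputable section

/-- The `ℓ_p` norm of a complex vector, `p ∈ [1,∞]`. -/
def lpV (p : ℝ≥0∞) {n : ℕ} (v : Fin n → ℂ) : ℝ :=
  if p = ∞ then ⨆ i, ‖v i‖ else (∑ i, ‖v i‖ ^ p.toReal) ^ (1 / p.toReal)

/-- The `ℓ_{q,p}` norm of a complex matrix: the `ℓ_q` norm of the vector of
`ℓ_p` norms of its columns. -/
def lqp (q p : ℝ≥0∞) {m n : ℕ} (A : Matrix (Fin m) (Fin n) ℂ) : ℝ :=
  lpV q fun j => ((lpV p fun i => A i j : ℝ) : ℂ)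

/-- A density matrix: positive semidefinite with trace one. -/
def IsDensity {n : ℕ} (ρ : Matrix (Fin n) (Fin n) ℂ) : Prop :=
  ρ.PosSemidef ∧ ρ.trace = 1

/-- An incoherent (classical) state: a diagonal density matrix. -/
def IsIncoherentState {n : ℕ} (ρ : Matrix (Fin n) (Fin n) ℂ) : Prop :=
  IsDensity ρ ∧ ρ.IsDiag

/-- `C_ν(ρ) = min {ν(ρ - σ) : σ ∈ I_n}` (as an infimum). -/
def distC {n : ℕ} (ν : Matrix (Fin n) (Fin n) ℂ → ℝ) (ρ : Matrix (Fin n) (Fin n) ℂ) : ℝ :=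
  sInf {x | ∃ σ, IsIncoherentState σ ∧ x = ν (ρ - σ)}

/-- A set of incoherent Kraus operators `K_j : M_{m,n}`:
`∑ K_j† K_j = I` and each `K_j σ K_j†` is diagonal for diagonal densities `σ`. -/
def IsIncoherentKraus {m n r : ℕ} (K : Fin r → Matrix (Fin m) (Fin n) ℂ) : Prop :=
  (∑ j, (K j)ᴴ * K j) = 1 ∧
  ∀ j (σ : Matrix (Fin n) (Fin n) ℂ), IsIncoherentState σ → (K j * σ * (K j)ᴴ).IsDiag

/-- A family of candidate coherence measures, one for each dimension. -/
abbrev CFam := ∀ n : ℕ, Matrix (Fin n) (Fin n) ℂ → ℝ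

/-- Condition (B1) = (C1): nonnegativity, vanishing exactly on incoherent states. -/
def CondB1 (C : CFam) : Prop :=
  ∀ n (ρ : Matrix (Fin n) (Fin n) ℂ), IsDensity ρ →
    0 ≤ C n ρ ∧ (C n ρ = 0 ↔ IsIncoherentState ρ)

/-- Condition (B2) = (C2): monotonicity under incoherent operations. -/
def CondB2 (C : CFam) : Prop :=
  ∀ (n m r : ℕ) (K : Fin r → Matrix (Fin m) (Fin n) ℂ), IsIncoherentKraus K →
    ∀ ρ, IsDensity ρ → C m (∑ j, K j * ρ * (K j)ᴴ) ≤ C n ρ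

/-- Condition (B3): monotonicity on average under selective incoherent operations. -/
def CondB3 (C : CFam) : Prop :=
  ∀ (n m r : ℕ) (K : Fin r → Matrix (Fin m) (Fin n) ℂ), IsIncoherentKraus K →
    ∀ ρ, IsDensity ρ →
      ∑ j, ((K j * ρ * (K j)ᴴ).trace).re *
          C m (((((K j * ρ * (K j)ᴴ).trace).re)⁻¹ : ℂ) • (K j * ρ * (K j)ᴴ)) ≤ C n ρ

/-- Condition (B4): convexity. -/
def CondB4 (C : CFam) : Prop :=
  ∀ (n r : ℕ) (ρ : Fin r → Matrix (Fin n) (Fin n) ℂ) (p : Fin r → ℝ),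
    (∀ j, IsDensity (ρ j)) → (∀ j, 0 ≤ p j) → (∑ j, p j) = 1 →
    C n (∑ j, (p j : ℂ) • ρ j) ≤ ∑ j, p j * C n (ρ j)

/-- Block diagonal direct sum of two square matrices, reindexed to `Fin (n₁ + n₂)`. -/
def dirSum {n₁ n₂ : ℕ} (A : Matrix (Fin n₁) (Fin n₁) ℂ) (B : Matrix (Fin n₂) (Fin n₂) ℂ) :
    Matrix (Fin (n₁ + n₂)) (Fin (n₁ + n₂)) ℂ :=
  (Matrix.fromBlocks A 0 0 B).submatrix finSumFinEquiv.symm finSumFinEquiv.symm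

/-- Condition (C3): additivity under direct sum convex combinations. -/
def CondC3 (C : CFam) : Prop :=
  ∀ (n₁ n₂ : ℕ) (ρ₁ : Matrix (Fin n₁) (Fin n₁) ℂ) (ρ₂ : Matrix (Fin n₂) (Fin n₂) ℂ)
    (p₁ p₂ : ℝ), IsDensity ρ₁ → IsDensity ρ₂ → 0 ≤ p₁ → 0 ≤ p₂ → p₁ + p₂ = 1 →
    C (n₁ + n₂) (dirSum ((p₁ : ℂ) • ρ₁) ((p₂ : ℂ) • ρ₂)) = p₁ * C n₁ ρ₁ + p₂ * C n₂ ρ₂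

/-- A norm on `M_n(ℂ)` (nonnegativity is automatic). -/
def IsMatrixNorm {n : ℕ} (ν : Matrix (Fin n) (Fin n) ℂ → ℝ) : Prop :=
  (∀ A, ν A = 0 ↔ A = 0) ∧ (∀ (c : ℂ) A, ν (c • A) = ‖c‖ * ν A) ∧
  (∀ A B, ν (A + B) ≤ ν A + ν B)


/-- The `n × n` all-ones matrix `J_n`. -/
def Jmat (n : ℕ) : Matrix (Fin n) (Fin n) ℂ := Matrix.of fun _ _ => 1

/-- The pair of Kraus operators `K₁ = (sin θ) Iₙ ⊕ [0]`, `K₂ = (cos θ) Iₙ ⊕ [1]`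
in `M_{n+1}(ℂ)`. -/
def KrausPair (n : ℕ) (θ : ℝ) : Fin 2 → Matrix (Fin (n + 1)) (Fin (n + 1)) ℂ :=
  ![Matrix.diagonal fun i => if (i : ℕ) < n then (Real.sin θ : ℂ) else 0,
    Matrix.diagonal fun i => if (i : ℕ) < n then (Real.cos θ : ℂ) else 1]

open Finset Real

section Norms

variable {m n : ℕ}

lemma lpV_nonneg (p : ℝ≥0∞) (v : Fin n → ℂ) : 0 ≤ lpV p v := by
  unfold lpV
  split_ifs
  · exact Real.iSup_nonneg fun i => norm_nonneg _
  · exact rpow_nonneg (sum_nonneg fun i _ => rpow_nonneg (norm_nonneg _) _) _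

lemma lpV_mono (p : ℝ≥0∞) {v w : Fin n → ℂ} (h : ∀ i, ‖v i‖ ≤ ‖w i‖) :
    lpV p v ≤ lpV p w := by
  unfold lpV
  split_ifs
  · exact ciSup_mono (Finite.bddAbove_range _) h
  · exact rpow_le_rpow (sum_nonneg fun i _ => rpow_nonneg (norm_nonneg _) _)
      (sum_le_sum fun i _ => rpow_le_rpow (norm_nonneg _) (h i) ENNReal.toReal_nonneg)
      (by positivity)

lemma lqp_nonneg (q p : ℝ≥0∞) (A : Matrix (Fin m) (Fin n) ℂ) : 0 ≤ lqp q p A :=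
  lpV_nonneg _ _

lemma lqp_mono (q p : ℝ≥0∞) {A B : Matrix (Fin m) (Fin n) ℂ}
    (h : ∀ i j, ‖A i j‖ ≤ ‖B i j‖) : lqp q p A ≤ lqp q p B :=
  lpV_mono q fun j => by
    simp only [Complex.norm_real, Real.norm_of_nonneg (lpV_nonneg _ _)]
    exact lpV_mono p fun i => h i j

lemma lqp_one_ofReal {p : ℝ} (hp : 0 < p) (A : Matrix (Fin m) (Fin n) ℂ) :
    lqp 1 (ENNReal.ofReal p) A = ∑ j, (∑ i, ‖A i j‖ ^ p) ^ p⁻¹ := by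
  simp only [lqp, lpV, ENNReal.one_ne_top, ENNReal.ofReal_ne_top, if_false, ENNReal.toReal_one,
    ENNReal.toReal_ofReal hp.le, rpow_one, div_one, one_div]
  refine sum_congr rfl fun j _ => ?_
  rw [Complex.norm_real, Real.norm_of_nonneg (by positivity)]

theorem distC_lqp_eq_sub_diagonal (q p : ℝ≥0∞) (ρ : Matrix (Fin n) (Fin n) ℂ)
    (hρ : IsIncoherentState (diagonal ρ.diag)) :
    distC (lqp q p) ρ = lqp q p (ρ - diagonal ρ.diag) := by
  refine le_antisymm (csInf_le ⟨0, ?_⟩ ⟨_, hρ, rfl⟩) (le_csInf ⟨_, _, hρ, rfl⟩ ?_)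
  · rintro _ ⟨σ, -, rfl⟩
    exact lqp_nonneg _ _ _
  · rintro _ ⟨σ, hσ, rfl⟩
    refine lqp_mono q p fun i j => ?_
    rcases eq_or_ne i j with rfl | hij
    · simp
    · simp [hij, hσ.2 hij]

end Norms

section RankOne

variable {n : ℕ}

def realOuter (t : ℝ) (y : Fin n → ℝ) : Matrix (Fin n) (Fin n) ℂ :=
  of fun i j => ((t * (y i * y j) : ℝ) : ℂ)

/-- `C_{1,p}(y yᵀ)` for a unit vector `y ≥ 0`: column `j` of the off-diagonal part of `y yᵀ` has
`ℓ_p` norm `y j (∑_{i ≠ j} y i ^ p)^{1/p}`. -/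
def offDiagNorm (p : ℝ) (y : Fin n → ℝ) : ℝ :=
  ∑ j, y j * (∑ i, y i ^ p - y j ^ p) ^ p⁻¹

lemma trace_realOuter (t : ℝ) (y : Fin n → ℝ) :
    (realOuter t y).trace = ((t * ∑ i, y i ^ 2 : ℝ) : ℂ) := by
  simp [realOuter, trace, mul_sum, sq]

lemma ofReal_smul_realOuter (c t : ℝ) (y : Fin n → ℝ) :
    (c : ℂ) • realOuter t y = realOuter (c * t) y := by
  ext i j
  simp [realOuter, mul_assoc]

lemma diagonal_mul_realOuter_mul_conjTranspose (d : Fin n → ℝ) (t : ℝ) (y : Fin n → ℝ) :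
    diagonal (fun i => (d i : ℂ)) * realOuter t y * (diagonal fun i => (d i : ℂ))ᴴ =
      realOuter t (d * y) := by
  ext i j
  simp [realOuter, diagonal_conjTranspose, mul_diagonal, diagonal_mul]
  ring

lemma isIncoherentState_diagonal_diag_realOuter {t : ℝ} {y : Fin n → ℝ}
    (ht : t * ∑ i, y i ^ 2 = 1) (ht0 : 0 ≤ t) :
    IsIncoherentState (diagonal (realOuter t y).diag) := by
  refine ⟨⟨PosSemidef.diagonal fun i => ?_, ?_⟩, isDiag_diagonal _⟩
  · exact Complex.zero_le_real.2 (mul_nonneg ht0 (mul_self_nonneg (y i)))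
  · rw [trace_diagonal, ← trace, trace_realOuter, ht, Complex.ofReal_one]

lemma sum_norm_sub_diagonal_realOuter_rpow {p t : ℝ} (hp : 0 < p) (ht : 0 ≤ t)
    {y : Fin n → ℝ} (hy : 0 ≤ y) (j : Fin n) :
    ∑ i, ‖(realOuter t y - diagonal (realOuter t y).diag) i j‖ ^ p =
      (t * y j) ^ p * (∑ i, y i ^ p - y j ^ p) := by
  have hentry : ∀ i, ‖(realOuter t y - diagonal (realOuter t y).diag) i j‖ ^ p =
      (t * y j) ^ p * y i ^ p - if i = j then (t * y j) ^ p * y j ^ p else 0 := by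
    intro i
    rcases eq_or_ne i j with rfl | hij
    · simp [zero_rpow hp.ne']
    · have : 0 ≤ t * (y i * y j) := mul_nonneg ht (mul_nonneg (hy i) (hy j))
      rw [Matrix.sub_apply, diagonal_apply_ne _ hij, sub_zero, if_neg hij, sub_zero]
      change ‖((t * (y i * y j) : ℝ) : ℂ)‖ ^ p = _
      rw [Complex.norm_real, Real.norm_of_nonneg this, ← mul_rpow (mul_nonneg ht (hy j)) (hy i)]
      ring_nf
  simp only [hentry, sum_sub_distrib, sum_ite_eq', mem_univ, if_true, mul_sub, mul_sum]

theorem distC_realOuter {p t : ℝ} (hp : 0 < p) {y : Fin n → ℝ} (hy : 0 ≤ y)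
    (ht : t * ∑ i, y i ^ 2 = 1) :
    distC (lqp 1 (ENNReal.ofReal p)) (realOuter t y) = t * offDiagNorm p y := by
  have ht0 : 0 ≤ t := by
    by_contra! h
    nlinarith [sum_nonneg fun i (_ : i ∈ univ) => sq_nonneg (y i)]
  rw [distC_lqp_eq_sub_diagonal _ _ _ (isIncoherentState_diagonal_diag_realOuter ht ht0),
    lqp_one_ofReal hp, offDiagNorm, mul_sum]
  refine sum_congr rfl fun j _ => ?_
  have hrest : 0 ≤ ∑ i, y i ^ p - y j ^ p := by
    rw [← sum_erase_add _ _ (mem_univ j), add_sub_cancel_right]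
    exact sum_nonneg fun i _ => rpow_nonneg (hy i) p
  have hyj : 0 ≤ t * y j := mul_nonneg ht0 (hy j)
  rw [sum_norm_sub_diagonal_realOuter_rpow hp ht0 hy, mul_rpow (rpow_nonneg hyj p) hrest,
    rpow_rpow_inv hyj hp.ne', mul_assoc]

/-- The term `p_j C(ρ_j)` of (B3) for an outcome `t • y yᵀ`; when `p_j = 0` both sides vanish,
the left one because `0⁻¹ = 0`. -/
theorem trace_re_mul_distC_smul_realOuter {p : ℝ} (hp : 0 < p) (t : ℝ) {y : Fin n → ℝ}
    (hy : 0 ≤ y) :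
    (realOuter t y).trace.re *
        distC (lqp 1 (ENNReal.ofReal p)) ((((realOuter t y).trace.re)⁻¹ : ℂ) • realOuter t y) =
      t * offDiagNorm p y := by
  rw [trace_realOuter, Complex.ofReal_re]
  set S := ∑ i, y i ^ 2
  rcases eq_or_ne t 0 with rfl | ht
  · simp
  rcases eq_or_ne S 0 with hS | hS
  · have hy0 : y = 0 := funext fun i =>
      pow_eq_zero_iff two_ne_zero |>.1 <|
        (sum_eq_zero_iff_of_nonneg fun i _ => sq_nonneg (y i)).1 hS i (mem_univ i)
    simp [hS, hy0, offDiagNorm]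
  rw [← Complex.ofReal_inv, ofReal_smul_realOuter,
    distC_realOuter hp hy (by field_simp : (t * S)⁻¹ * t * S = 1)]
  field_simp

lemma offDiagNorm_one (p : ℝ) : offDiagNorm p (1 : Fin n → ℝ) = n * (n - 1) ^ p⁻¹ := by
  simp [offDiagNorm]

end RankOne

def blockVec (n : ℕ) (a b : ℝ) : Fin (n + 1) → ℝ := fun i => if (i : ℕ) < n then a else b

lemma blockVec_nonneg {n : ℕ} {a b : ℝ} (ha : 0 ≤ a) (hb : 0 ≤ b) : 0 ≤ blockVec n a b :=
  fun i => by
    unfold blockVec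
    split_ifs <;> assumption

lemma krausPair_eq_diagonal (n : ℕ) (θ : ℝ) :
    KrausPair n θ = fun j => diagonal fun i =>
      ((![blockVec n (sin θ) 0, blockVec n (cos θ) 1] j i : ℝ) : ℂ) := by
  ext j : 1
  fin_cases j <;> simp [KrausPair, blockVec, apply_ite]

theorem isIncoherentKraus_diagonal {m r : ℕ} (d : Fin r → Fin m → ℂ)
    (hd : ∀ i, ∑ j, star (d j i) * d j i = 1) : IsIncoherentKraus fun j => diagonal (d j) := by
  refine ⟨?_, fun j σ hσ i k hik => ?_⟩
  · ext i k
    simp only [diagonal_conjTranspose, diagonal_mul_diagonal, Matrix.sum_apply]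
    rcases eq_or_ne i k with rfl | hik
    · simpa using hd i
    · simp [hik]
  · simp only [diagonal_conjTranspose, mul_diagonal, diagonal_mul, hσ.2 hik, mul_zero, zero_mul]

theorem isIncoherentKraus_krausPair (n : ℕ) (θ : ℝ) : IsIncoherentKraus (KrausPair n θ) := by
  rw [krausPair_eq_diagonal]
  refine isIncoherentKraus_diagonal _ fun i => ?_
  by_cases hi : (i : ℕ) < n
  · simp [blockVec, hi, ← sq, ← Complex.ofReal_pow, ← Complex.ofReal_add]
  · simp [blockVec, hi]

lemma offDiagNorm_blockVec {n : ℕ} (p a b : ℝ) :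
    offDiagNorm p (blockVec n a b) =
      n * (a * ((n - 1) * a ^ p + b ^ p) ^ p⁻¹) + b * (n * a ^ p) ^ p⁻¹ := by
  have hsum : ∑ i, blockVec n a b i ^ p = n * a ^ p + b ^ p := by
    simp [Fin.sum_univ_castSucc, blockVec]
  rw [offDiagNorm, hsum, Fin.sum_univ_castSucc]
  simp only [blockVec, Fin.val_castSucc, Fin.is_lt, if_true, Fin.val_last, lt_irrefl, if_false,
    sum_const, card_univ, Fintype.card_fin, nsmul_eq_mul, add_sub_cancel_right]
  ring_nf

lemma one_sub_inv_mul_rpow_inv_le_sub_one_rpow_inv {a p : ℝ} (ha : 1 ≤ a) (hp : 1 ≤ p) :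
    (1 - a⁻¹) * a ^ p⁻¹ ≤ (a - 1) ^ p⁻¹ := by
  have ha0 : 0 < a := by linarith
  have hq : 0 ≤ 1 - a⁻¹ := sub_nonneg.2 (inv_le_one_of_one_le₀ ha)
  calc (1 - a⁻¹) * a ^ p⁻¹ ≤ (1 - a⁻¹) ^ p⁻¹ * a ^ p⁻¹ := by
        gcongr
        exact self_le_rpow_of_le_one hq (by linarith [inv_pos.2 ha0]) (inv_le_one_of_one_le₀ hp)
    _ = (a - 1) ^ p⁻¹ := by
        rw [← mul_rpow hq ha0.le, sub_mul, inv_mul_cancel₀ ha0.ne', one_mul]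

lemma exists_three_mul_rpow_inv_le_sqrt {p : ℝ} (hp : 2 < p) :
    ∃ n : ℕ, 2 ≤ n ∧ 3 * (n : ℝ) ^ p⁻¹ ≤ √n := by
  have hα : 0 < 2⁻¹ - p⁻¹ := sub_pos.2 (inv_strictAnti₀ two_pos hp)
  obtain ⟨n, h3, h2⟩ := (((tendsto_rpow_atTop hα).comp tendsto_natCast_atTop_atTop).eventually
    (Filter.eventually_ge_atTop 3) |>.and (Filter.eventually_ge_atTop 2)).exists
  have hn : (0 : ℝ) < n := by exact_mod_cast (by omega : 0 < n)
  refine ⟨n, h2, ?_⟩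
  calc 3 * (n : ℝ) ^ p⁻¹ ≤ (n : ℝ) ^ (2⁻¹ - p⁻¹) * (n : ℝ) ^ p⁻¹ := by gcongr; exact h3
    _ = √n := by rw [← rpow_add hn, sub_add_cancel, sqrt_eq_rpow, one_div]

theorem offDiagNorm_one_lt_add_blockVec {p : ℝ} (hp : 1 ≤ p) {n : ℕ} (hn : 2 ≤ n)
    (h3 : 3 * (n : ℝ) ^ p⁻¹ ≤ √n) {s : ℝ} (hs : 0 ≤ s) (hsc : s ^ 2 + (√n)⁻¹ ^ 2 = 1) :
    offDiagNorm p (1 : Fin (n + 1) → ℝ) <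
      offDiagNorm p (blockVec n s 0) + offDiagNorm p (blockVec n (√n)⁻¹ 1) := by
  have hp0 : 0 < p := by linarith
  have hn1 : (1 : ℝ) ≤ n := by exact_mod_cast (by omega : 1 ≤ n)
  set x := (n : ℝ) ^ p⁻¹
  set r := √(n : ℝ)
  have hx : 0 < x := rpow_pos_of_pos (by linarith) _
  have hr : 0 < r := sqrt_pos.2 (by linarith)
  have hrr : r ^ 2 = n := sq_sqrt (by linarith)
  have hone : offDiagNorm p (1 : Fin (n + 1) → ℝ) = (n + 1) * x := by
    rw [offDiagNorm_one]
    push_cast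
    rw [add_sub_cancel_right]
  have hfirst : offDiagNorm p (blockVec n s 0) = (n - 1) * (n - 1) ^ p⁻¹ := by
    have hs2 : (n : ℝ) * s ^ 2 = n - 1 := by
      field_simp at hsc
      rw [hrr] at hsc
      linarith
    rw [offDiagNorm_blockVec, zero_rpow hp0.ne', add_zero, zero_mul, add_zero,
      mul_rpow (by linarith) (rpow_nonneg hs p), rpow_rpow_inv hs hp0.ne', ← hs2]
    ring
  have hsecond : r + x / r ≤ offDiagNorm p (blockVec n r⁻¹ 1) := by
    have hA : 1 ≤ (((n : ℝ) - 1) * r⁻¹ ^ p + 1 ^ p) ^ p⁻¹ :=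
      one_le_rpow (by rw [one_rpow]; nlinarith [rpow_nonneg (inv_pos.2 hr).le p])
        (inv_nonneg.2 hp0.le)
    rw [offDiagNorm_blockVec, one_mul, mul_rpow (by linarith) (rpow_nonneg (inv_pos.2 hr).le p),
      rpow_rpow_inv (inv_pos.2 hr).le hp0.ne']
    have : r = n * r⁻¹ := by field_simp; exact hrr
    calc r + x / r = n * (r⁻¹ * 1) + x * r⁻¹ := by rw [mul_one, ← this, div_eq_mul_inv]
      _ ≤ _ := by gcongr
  have hlast := one_sub_inv_mul_rpow_inv_le_sub_one_rpow_inv hn1 hp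
  have hexpand : ((n : ℝ) - 1) * ((1 - (n : ℝ)⁻¹) * x) = (n - 2) * x + x * (n : ℝ)⁻¹ := by
    field_simp
    ring
  rw [hone, hfirst]
  calc ((n : ℝ) + 1) * x ≤ (n - 2) * x + r := by linarith
    _ < (n - 1) * ((1 - (n : ℝ)⁻¹) * x) + (r + x / r) := by
        rw [hexpand]
        linarith [mul_pos hx (inv_pos.2 (by linarith : (0 : ℝ) < n)), div_pos hx hr]
    _ ≤ (n - 1) * (n - 1) ^ p⁻¹ + offDiagNorm p (blockVec n r⁻¹ 1) := by
        gcongr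

/-- for every finite `p > 2`, the family `C_{1,p}` fails (B3):
there are `n` and `θ ∈ (0, π/2)` such that the incoherent Kraus operators
`K₁ = (sin θ) Iₙ ⊕ [0]`, `K₂ = (cos θ) Iₙ ⊕ [1]` and `ρ = J_{n+1}/(n+1)` give
`∑ⱼ pⱼ C_{1,p}(ρⱼ) > C_{1,p}(ρ)`. -/
theorem C_one_p_fails_B3_of_two_lt (p : ℝ) (hp : 2 < p) :
    ∃ (n : ℕ) (θ : ℝ), 0 < θ ∧ θ < Real.pi / 2 ∧
      IsIncoherentKraus (KrausPair n θ) ∧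
      distC (lqp 1 (ENNReal.ofReal p)) (((n : ℂ) + 1)⁻¹ • Jmat (n + 1)) <
        ∑ j : Fin 2,
          ((KrausPair n θ j * (((n : ℂ) + 1)⁻¹ • Jmat (n + 1)) * (KrausPair n θ j)ᴴ).trace).re *
            distC (lqp 1 (ENNReal.ofReal p))
              (((((KrausPair n θ j * (((n : ℂ) + 1)⁻¹ • Jmat (n + 1)) *
                      (KrausPair n θ j)ᴴ).trace).re)⁻¹ : ℂ) •
                (KrausPair n θ j * (((n : ℂ) + 1)⁻¹ • Jmat (n + 1)) * (KrausPair n θ j)ᴴ)) := by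
  have hp0 : 0 < p := by linarith
  obtain ⟨n, hn, h3⟩ := exists_three_mul_rpow_inv_le_sqrt hp
  have hc0 : 0 < (√n)⁻¹ := inv_pos.2 (sqrt_pos.2 (by exact_mod_cast (by omega : 0 < n)))
  have hc1 : (√n)⁻¹ < 1 := inv_lt_one_of_one_lt₀ (lt_sqrt zero_le_one |>.2
    (by exact_mod_cast (by omega : 1 < n)))
  set θ := arccos (√n)⁻¹
  have hcos : cos θ = (√n)⁻¹ := cos_arccos (by linarith) hc1.le
  have hsin : 0 ≤ sin θ := sin_arccos _ ▸ sqrt_nonneg _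
  have hρ : ((n : ℂ) + 1)⁻¹ • Jmat (n + 1) = realOuter ((n : ℝ) + 1)⁻¹ 1 := by
    ext i j
    simp [realOuter, Jmat]
  refine ⟨n, θ, arccos_pos.2 hc1, arccos_lt_pi_div_two.2 hc0, isIncoherentKraus_krausPair n θ, ?_⟩
  rw [hρ, distC_realOuter hp0 zero_le_one (by simp; field_simp), krausPair_eq_diagonal,
    Fin.sum_univ_two]
  simp only [diagonal_mul_realOuter_mul_conjTranspose, mul_one, Matrix.cons_val_zero,
    Matrix.cons_val_one, trace_re_mul_distC_smul_realOuter hp0 _ (blockVec_nonneg hsin le_rfl),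
    trace_re_mul_distC_smul_realOuter hp0 _ (blockVec_nonneg hc0.le zero_le_one), hcos, ← mul_add]
  exact mul_lt_mul_of_pos_left (offDiagNorm_one_lt_add_blockVec (by linarith) hn h3 hsin
    (by rw [← hcos, sin_sq_add_cos_sq])) (by positivity)
end
end

section
/- Let ‖·‖ be an absolute norm on M_n(ℂ), i.e., ‖(a_{ij})‖ = ‖(|a_{ij}|)‖ for all matrices. Then for every ρ ∈ D_n, min{‖ρ − σ‖ : σ ∈ I_n} = ‖ρ − ρ_diag‖, where ρ_diag is the diagonal matrix with the same diagonal entries as ρ. -/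
open scoped ENNReal ComplexOrder
open Matrix

noncomputable section

/-!
Flipping the sign of one entry of a matrix does not change its entrywise absolute values, so an
absolute norm is invariant under it; averaging the matrix with its flip zeroes that entry, so by the
triangle inequality zeroing entries never increases an absolute norm. For a diagonal state `σ`,
zeroing the diagonal of `ρ - σ` gives `ρ - ρ_diag`, and `ρ_diag` is itself an incoherent state.
-/

section AbsoluteNorm

variable {m n : Type*} [DecidableEq m] [DecidableEq n] {ν : Matrix m n ℂ → ℝ}
  (hsmul : ∀ (c : ℂ) A, ν (c • A) = ‖c‖ * ν A) (hadd : ∀ A B, ν (A + B) ≤ ν A + ν B)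
  (habs : ∀ A : Matrix m n ℂ, ν (A.map fun z => (‖z‖ : ℂ)) = ν A)

def zeroEntries (S : Finset (m × n)) (M : Matrix m n ℂ) : Matrix m n ℂ :=
  of fun i j => if (i, j) ∈ S then 0 else M i j

def negEntry (a : m × n) (M : Matrix m n ℂ) : Matrix m n ℂ :=
  of fun i j => if (i, j) = a then -M i j else M i j

include habs in
lemma apply_negEntry (a : m × n) (M : Matrix m n ℂ) : ν (negEntry a M) = ν M := by
  have : (negEntry a M).map (fun z => (‖z‖ : ℂ)) = M.map fun z => (‖z‖ : ℂ) := by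
    ext i j
    by_cases h : (i, j) = a <;> simp [negEntry, h]
  rw [← habs, this, habs]

lemma zeroEntries_insert (a : m × n) (S : Finset (m × n)) (M : Matrix m n ℂ) :
    zeroEntries (insert a S) M =
      (1 / 2 : ℂ) • (zeroEntries S M + negEntry a (zeroEntries S M)) := by
  ext i j
  by_cases ha : (i, j) = a
  · simp [zeroEntries, negEntry, ha]
  · by_cases hS : (i, j) ∈ S <;> simp [zeroEntries, negEntry, ha, hS]; ring

include hsmul hadd habs in
lemma apply_zeroEntries_le (S : Finset (m × n)) (M : Matrix m n ℂ) :
    ν (zeroEntries S M) ≤ ν M := by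
  induction S using Finset.induction_on with
  | empty => exact le_of_eq (congrArg ν (by ext; simp [zeroEntries]))
  | insert a S _ ih =>
    calc ν (zeroEntries (insert a S) M)
        ≤ ‖(1 / 2 : ℂ)‖ * (ν (zeroEntries S M) + ν (negEntry a (zeroEntries S M))) := by
          rw [zeroEntries_insert, hsmul]
          gcongr
          exact hadd _ _
      _ = ν (zeroEntries S M) := by rw [apply_negEntry habs]; norm_num; ring
      _ ≤ ν M := ih

end AbsoluteNorm

lemma zeroEntries_diagonal_sub {n : Type*} [Fintype n] [DecidableEq n]
    (ρ σ : Matrix n n ℂ) (hσ : σ.IsDiag) :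
    zeroEntries Finset.univ.diag (ρ - σ) = ρ - diagonal ρ.diag := by
  ext i j
  by_cases hij : i = j
  · subst hij; simp [zeroEntries]
  · simp [zeroEntries, hij, hσ hij]

lemma IsDensity.isIncoherentState_diagonal_diag {n : ℕ} {ρ : Matrix (Fin n) (Fin n) ℂ}
    (hρ : IsDensity ρ) : IsIncoherentState (diagonal ρ.diag) :=
  ⟨⟨posSemidef_diagonal_iff.mpr fun _ => hρ.1.diag_nonneg, by rw [trace_diagonal]; exact hρ.2⟩,
    isDiag_diagonal _⟩

/-- Proposition 2.2 (b): if `‖·‖` is an absolute norm on `M_n(ℂ)`,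
i.e. `‖(a_{ij})‖ = ‖(|a_{ij}|)‖`, then for every density matrix `ρ`,
`min{‖ρ - σ‖ : σ ∈ I_n} = ‖ρ - ρ_diag‖`. -/
theorem distC_of_absolute_norm
    (n : ℕ) (ν : Matrix (Fin n) (Fin n) ℂ → ℝ) (hν : IsMatrixNorm ν)
    (habs : ∀ A : Matrix (Fin n) (Fin n) ℂ, ν (A.map fun z => (‖z‖ : ℂ)) = ν A) :
    ∀ ρ, IsDensity ρ → distC ν ρ = ν (ρ - Matrix.diagonal fun i => ρ i i) := by
  intro ρ hρ
  refine IsLeast.csInf_eq ⟨⟨_, hρ.isIncoherentState_diagonal_diag, rfl⟩, ?_⟩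
  rintro _ ⟨σ, ⟨-, hσ⟩, rfl⟩
  have := apply_zeroEntries_le hν.2.1 hν.2.2 habs Finset.univ.diag (ρ - σ)
  rwa [zeroEntries_diagonal_sub ρ σ hσ] at this
end
end

section
/- Let p ∈ [1,2] and let {K_1,…,K_m} ⊆ M_{N,n}(ℂ) be a set of incoherent Kraus operators. Then for every A ∈ M_n(ℂ), Σ_{k=1}^m ℓ_{1,p}(K_k A K_k†) ≤ ℓ_{1,p}(A). -/
open scoped ENNReal ComplexOrder
open Matrix

noncomputable section

/-!
Incoherence forces every column of each `K k` to have at most one nonzero entry. Column `b` of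
`K A Kᴴ` is `∑ j, conj (K b j) • K (A.col j)`, so by the triangle inequality the claim reduces,
column by column of `A`, to `∑ k, w k * ‖K k x‖_p ≤ ‖x‖_p` with `w k = ∑ b, ‖K k b j‖`. By
sparsity `∑ k, w k ^ 2 = ∑ k b, ‖K k b j‖ ^ 2 = 1`, so by Cauchy–Schwarz it suffices that
`∑ k, ‖K k x‖_p ^ 2 ≤ ‖x‖_p ^ 2`.

For `p = 2` this is the isometry `∑ (K k)ᴴ K k = 1`, and we interpolate towards smaller `p`: a
layer-cake argument turns the isometry into the weighted bound
`∑ k a, ν k a ^ (1 - 2/p) ‖(K k x) a‖² ≤ ∑ i, ‖x i‖ ^ (p - 2) ‖x i‖²`, where `ν k a` is the mass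
`∑ ‖x i‖ ^ p` of `x` on the support of row `a` of `K k` (`rowMass`). Hölder's inequality with
weights `ν k a` converts this into the `ℓ_p` bound, because by sparsity `∑ a, ν k a ≤ ‖x‖_p ^ p`.
-/

open Finset

lemma lpV_eq_norm_toLp {p : ℝ≥0∞} (hp : p ≠ 0) {n : ℕ} (v : Fin n → ℂ) :
    lpV p v = ‖WithLp.toLp p v‖ :=
  (if_neg hp).symm

lemma lqp_one_eq_sum {p : ℝ≥0∞} [Fact (1 ≤ p)] {m n : ℕ} (A : Matrix (Fin m) (Fin n) ℂ) :
    lqp 1 p A = ∑ j, ‖WithLp.toLp p (A.col j)‖ := by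
  rw [lqp, lpV, if_neg ENNReal.one_ne_top]
  simp only [lpV_eq_norm_toLp (zero_lt_one.trans_le Fact.out).ne', ENNReal.toReal_one,
    Real.rpow_one, div_one, Complex.norm_real, Real.norm_eq_abs, abs_norm]
  rfl

lemma norm_toLp_sq {p : ℝ≥0∞} (hp : 0 < p.toReal) {J : Type*} [Fintype J] (v : J → ℂ) :
    ‖WithLp.toLp p v‖ ^ 2 = (∑ j, ‖v j‖ ^ p.toReal) ^ (2 / p.toReal) := by
  rw [PiLp.norm_eq_sum hp, ← Real.rpow_natCast, ← Real.rpow_mul (by positivity)]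
  simp [div_eq_inv_mul]

lemma sum_rpow_le_weighted_sum_sq {R : Type*} [Fintype R] {t : ℝ} (ht0 : 0 < t) (ht2 : t ≤ 2)
    (u ν : R → ℝ) (hu : ∀ a, 0 ≤ u a) (hν : ∀ a, 0 ≤ ν a) (huν : ∀ a, ν a = 0 → u a = 0) :
    ∑ a, u a ^ t ≤ (∑ a, ν a) ^ (1 - t / 2) * (∑ a, ν a ^ (1 - 2 / t) * u a ^ 2) ^ (t / 2) := by
  have hHolder := Real.inner_le_weight_mul_Lp_of_nonneg univ (p := 2 / t)
    (by rw [le_div_iff₀ ht0]; linarith) ν (fun a => u a ^ t / ν a) hν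
    (fun a => div_nonneg (Real.rpow_nonneg (hu a) t) (hν a))
  have hmul : ∀ a, ν a * (u a ^ t / ν a) = u a ^ t := fun a => by
    rcases (hν a).eq_or_lt with h | h
    · simp [← h, huν a h.symm, ht0.ne']
    · field_simp
  have hpow : ∀ a, ν a * (u a ^ t / ν a) ^ (2 / t) = ν a ^ (1 - 2 / t) * u a ^ 2 := fun a => by
    rcases (hν a).eq_or_lt with h | h
    · simp [← h, huν a h.symm, ht0.ne']
    · rw [Real.div_rpow (Real.rpow_nonneg (hu a) t) h.le, ← Real.rpow_mul (hu a),
        mul_div_cancel₀ _ ht0.ne', Real.rpow_sub h, Real.rpow_one, Real.rpow_two]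
      ring
  simpa only [hmul, hpow, inv_div] using hHolder

section Sparse

variable {R I : Type*} [Fintype I]

lemma sq_sum_eq_sum_sq [Fintype R] {g : R → ℝ} (hg : ∀ a b, g a ≠ 0 → g b ≠ 0 → a = b) :
    (∑ a, g a) ^ 2 = ∑ a, g a ^ 2 := by
  rw [sq, sum_mul_sum]
  refine sum_congr rfl fun a _ =>
    (sum_eq_single a (fun b _ hba => ?_) (by simp)).trans (sq _).symm
  by_contra h
  exact hba (hg b a (right_ne_zero_of_mul h) (left_ne_zero_of_mul h))

def rowMass (M : Matrix R I ℂ) (x : I → ℂ) (s : ℝ) (a : R) : ℝ :=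
  ∑ i with M a i ≠ 0, ‖x i‖ ^ s

lemma rowMass_nonneg (M : Matrix R I ℂ) (x : I → ℂ) (s : ℝ) (a : R) : 0 ≤ rowMass M x s a :=
  sum_nonneg fun _ _ => by positivity

lemma norm_rpow_le_rowMass {M : Matrix R I ℂ} {a : R} {i : I} (h : M a i ≠ 0) (x : I → ℂ)
    (s : ℝ) : ‖x i‖ ^ s ≤ rowMass M x s a :=
  single_le_sum (f := fun i => ‖x i‖ ^ s) (fun _ _ => by positivity) (by simpa using h)

lemma mulVec_eq_zero_of_rowMass_eq_zero {M : Matrix R I ℂ} {x : I → ℂ} {s : ℝ} {a : R}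
    (h : rowMass M x s a = 0) : (M *ᵥ x) a = 0 :=
  sum_eq_zero fun i _ => by
    by_cases hM : M a i = 0
    · simp [hM]
    · have hx : x i = 0 := by
        by_contra hx
        exact (Real.rpow_pos_of_pos (norm_pos_iff.2 hx) s).not_ge
          ((norm_rpow_le_rowMass hM x s).trans_eq h)
      simp [hx]

lemma sum_rowMass_le [Fintype R] {M : Matrix R I ℂ} (hM : ∀ i a b, M a i ≠ 0 → M b i ≠ 0 → a = b)
    (x : I → ℂ) (s : ℝ) : ∑ a, rowMass M x s a ≤ ∑ i, ‖x i‖ ^ s := by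
  classical
  simp only [rowMass]
  rw [Finset.sum_comm' (t' := univ) (s' := fun i => {a | M a i ≠ 0}) (by simp)]
  refine sum_le_sum fun i _ => ?_
  rw [sum_const, nsmul_eq_mul]
  exact mul_le_of_le_one_left (by positivity) <| by
    exact_mod_cast card_le_one.2 fun a ha b hb => hM i a b (by simpa using ha) (by simpa using hb)

lemma norm_toLp_mulVec_sq_le [Fintype R] {p : ℝ≥0∞} (hp0 : 0 < p.toReal) (hp2 : p.toReal ≤ 2)
    {M : Matrix R I ℂ} (hM : ∀ i a b, M a i ≠ 0 → M b i ≠ 0 → a = b) (x : I → ℂ) :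
    ‖WithLp.toLp p (M *ᵥ x)‖ ^ 2 ≤ (∑ i, ‖x i‖ ^ p.toReal) ^ (2 / p.toReal - 1) *
      ∑ a, rowMass M x p.toReal a ^ (1 - 2 / p.toReal) * ‖(M *ᵥ x) a‖ ^ 2 := by
  set s := p.toReal
  set Q := ∑ a, rowMass M x s a ^ (1 - 2 / s) * ‖(M *ᵥ x) a‖ ^ 2
  have hmass : 0 ≤ ∑ a, rowMass M x s a := sum_nonneg fun a _ => rowMass_nonneg M x s a
  have hQ : 0 ≤ Q := sum_nonneg fun a _ =>
    mul_nonneg (Real.rpow_nonneg (rowMass_nonneg M x s a) _) (sq_nonneg _)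
  rw [norm_toLp_sq hp0]
  calc (∑ a, ‖(M *ᵥ x) a‖ ^ s) ^ (2 / s)
      ≤ ((∑ a, rowMass M x s a) ^ (1 - s / 2) * Q ^ (s / 2)) ^ (2 / s) := by
        gcongr
        exact sum_rpow_le_weighted_sum_sq hp0 hp2 _ _ (fun _ => norm_nonneg _)
          (rowMass_nonneg M x s) fun a h => by simp [mulVec_eq_zero_of_rowMass_eq_zero h]
    _ ≤ ((∑ i, ‖x i‖ ^ s) ^ (1 - s / 2) * Q ^ (s / 2)) ^ (2 / s) := by
        refine Real.rpow_le_rpow (by positivity) (mul_le_mul_of_nonneg_right ?_ (by positivity))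
          (by positivity)
        exact Real.rpow_le_rpow hmass (sum_rowMass_le hM x s) (by linarith)
    _ = (∑ i, ‖x i‖ ^ s) ^ (2 / s - 1) * Q := by
        rw [Real.mul_rpow (by positivity) (by positivity), ← Real.rpow_mul (by positivity),
          ← Real.rpow_mul hQ, show s / 2 * (2 / s) = 1 by field_simp,
          Real.rpow_one, show (1 - s / 2) * (2 / s) = 2 / s - 1 by field_simp]

end Sparse

lemma col_mul_mul_conjTranspose {R I : Type*} [Fintype I] (K : Matrix R I ℂ) (A : Matrix I I ℂ)
    (b : R) : (K * A * Kᴴ).col b = ∑ j, star (K b j) • (K *ᵥ A.col j) := by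
  ext a
  simp [mul_apply, mulVec, dotProduct, mul_comm]

section Kraus

variable {ι R I : Type*} [Fintype ι] [Fintype R] [Fintype I]

lemma ofReal_sum_norm_sq (v : I → ℂ) : ((∑ i, ‖v i‖ ^ 2 : ℝ) : ℂ) = star v ⬝ᵥ v := by
  simp [dotProduct, Complex.conj_mul']

lemma sum_sum_norm_mulVec_sq [DecidableEq I] (K : ι → Matrix R I ℂ)
    (hK : ∑ k, (K k)ᴴ * K k = 1) (x : I → ℂ) :
    ∑ k, ∑ r, ‖(K k *ᵥ x) r‖ ^ 2 = ∑ i, ‖x i‖ ^ 2 := by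
  apply Complex.ofReal_injective
  rw [Complex.ofReal_sum]
  simp only [ofReal_sum_norm_sq, star_mulVec, dotProduct_mulVec, vecMul_vecMul]
  rw [← sum_dotProduct, ← vecMul_sum, hK, vecMul_one]

/- Layer cake: subtracting the least weight `c` on the support of `x` from all weights changes
both sides by `c ∑ ‖K k x‖² = c ∑ ‖x‖²`, after which the minimizing coordinate `i₀` can be
dropped, since every row meeting it has weight at most `c`. -/
theorem sum_sum_mul_norm_mulVec_sq_le [DecidableEq I] (K : ι → Matrix R I ℂ)
    (hK : ∑ k, (K k)ᴴ * K k = 1) (α : I → ℝ) (β : ι → R → ℝ) (x : I → ℂ)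
    (hαβ : ∀ k r i, K k r i ≠ 0 → x i ≠ 0 → β k r ≤ α i) :
    ∑ k, ∑ r, β k r * ‖(K k *ᵥ x) r‖ ^ 2 ≤ ∑ i, α i * ‖x i‖ ^ 2 := by
  induction hs : #{i | x i ≠ 0} using Nat.strong_induction_on generalizing x α β with
  | _ s ih =>
  by_cases hx : x = 0
  · simp [hx]
  obtain ⟨i₀, hi₀, hmin⟩ := exists_min_image {i | x i ≠ 0} α
    (by simpa [Finset.Nonempty, Function.ne_iff] using hx)
  simp only [mem_filter, mem_univ, true_and] at hi₀ hmin
  set c := α i₀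
  set x' := Function.update x i₀ 0
  have hx' : x = x' + Pi.single i₀ (x i₀) := by
    ext i; rcases eq_or_ne i i₀ with rfl | h <;> simp [x', *]
  have hsupp : #{i | x' i ≠ 0} < s := by
    rw [← hs]
    refine card_lt_card (ssubset_iff_of_subset ?_ |>.2 ⟨i₀, by simpa, by simp [x']⟩)
    intro i; by_cases h : i = i₀ <;> simp [x', Function.update_apply, h]
  have hrow : ∀ k r, max (β k r - c) 0 * ‖(K k *ᵥ x) r‖ ^ 2
      = max (β k r - c) 0 * ‖(K k *ᵥ x') r‖ ^ 2 := by
    intro k r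
    by_cases hKr : K k r i₀ = 0
    · rw [hx', mulVec_add]; simp [hKr]
    · rw [max_eq_right (sub_nonpos.2 (hαβ k r i₀ hKr hi₀)), zero_mul, zero_mul]
  have hcol : ∑ i, (α i - c) * ‖x' i‖ ^ 2 = ∑ i, (α i - c) * ‖x i‖ ^ 2 := by
    refine sum_congr rfl fun i _ => ?_
    rcases eq_or_ne i i₀ with rfl | h
    · simp [x', c]
    · simp [x', h]
  have hstep := ih _ (hs ▸ hsupp) (fun i => α i - c) (fun k r => max (β k r - c) 0) x'
    (fun k r i hKr hxi => ?_) rfl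
  calc ∑ k, ∑ r, β k r * ‖(K k *ᵥ x) r‖ ^ 2
      ≤ ∑ k, ∑ r, (max (β k r - c) 0 * ‖(K k *ᵥ x) r‖ ^ 2 + c * ‖(K k *ᵥ x) r‖ ^ 2) := by
        gcongr with k _ r _
        rw [← add_mul]
        gcongr
        linarith [le_max_left (β k r - c) 0]
    _ = ∑ k, ∑ r, max (β k r - c) 0 * ‖(K k *ᵥ x') r‖ ^ 2 + c * ∑ i, ‖x i‖ ^ 2 := by
        simp only [sum_add_distrib, ← mul_sum, hrow, sum_sum_norm_mulVec_sq K hK]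
    _ ≤ ∑ i, (α i - c) * ‖x i‖ ^ 2 + c * ∑ i, ‖x i‖ ^ 2 := by
        rw [← hcol]; gcongr
    _ = ∑ i, α i * ‖x i‖ ^ 2 := by
        rw [mul_sum, ← sum_add_distrib]; simp only [sub_mul]; ring_nf
  · have hxi' : x i ≠ 0 := by rintro h; simp [x', Function.update_apply, h] at hxi
    exact max_le (sub_le_sub_right (hαβ k r i hKr hxi') c) (sub_nonneg.2 (hmin i hxi'))

lemma sum_sum_rowMass_rpow_mul_norm_mulVec_sq_le [DecidableEq I] {s : ℝ} (hs0 : 0 < s)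
    (hs2 : s ≤ 2) (K : ι → Matrix R I ℂ) (hK : ∑ k, (K k)ᴴ * K k = 1) (x : I → ℂ) :
    ∑ k, ∑ a, rowMass (K k) x s a ^ (1 - 2 / s) * ‖(K k *ᵥ x) a‖ ^ 2 ≤ ∑ i, ‖x i‖ ^ s := by
  refine (sum_sum_mul_norm_mulVec_sq_le K hK (fun i => ‖x i‖ ^ (s - 2)) _ x
    fun k a i hK0 hx0 => ?_).trans_eq (sum_congr rfl fun i _ => ?_)
  · have hxi : 0 < ‖x i‖ := norm_pos_iff.2 hx0
    calc rowMass (K k) x s a ^ (1 - 2 / s) ≤ (‖x i‖ ^ s) ^ (1 - 2 / s) :=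
          Real.rpow_le_rpow_of_nonpos (by positivity) (norm_rpow_le_rowMass hK0 x s)
            (by rw [sub_nonpos, le_div_iff₀ hs0]; linarith)
      _ = ‖x i‖ ^ (s - 2) := by
          rw [← Real.rpow_mul hxi.le]; congr 1; field_simp
  · rcases eq_or_ne (x i) 0 with hx0 | hx0
    · simp [hx0, hs0.ne']
    · rw [← Real.rpow_natCast, ← Real.rpow_add (norm_pos_iff.2 hx0)]
      norm_num

theorem sum_norm_toLp_mulVec_sq_le [DecidableEq I] {p : ℝ≥0∞} (hp0 : 0 < p) (hp2 : p ≤ 2)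
    (K : ι → Matrix R I ℂ) (hK : ∑ k, (K k)ᴴ * K k = 1)
    (hsparse : ∀ k i a b, K k a i ≠ 0 → K k b i ≠ 0 → a = b) (x : I → ℂ) :
    ∑ k, ‖WithLp.toLp p (K k *ᵥ x)‖ ^ 2 ≤ ‖WithLp.toLp p x‖ ^ 2 := by
  set s := p.toReal
  have hs2 : s ≤ 2 := by simpa using ENNReal.toReal_mono ENNReal.ofNat_ne_top hp2
  have hs0 : 0 < s := ENNReal.toReal_pos hp0.ne' (ne_top_of_le_ne_top ENNReal.ofNat_ne_top hp2)
  set L := ∑ i, ‖x i‖ ^ s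
  calc ∑ k, ‖WithLp.toLp p (K k *ᵥ x)‖ ^ 2
      ≤ ∑ k, L ^ (2 / s - 1) * ∑ a, rowMass (K k) x s a ^ (1 - 2 / s) * ‖(K k *ᵥ x) a‖ ^ 2 :=
        sum_le_sum fun k _ => norm_toLp_mulVec_sq_le hs0 hs2 (hsparse k) x
    _ ≤ L ^ (2 / s - 1) * L := by
        rw [← mul_sum]
        gcongr
        exact sum_sum_rowMass_rpow_mul_norm_mulVec_sq_le hs0 hs2 K hK x
    _ = ‖WithLp.toLp p x‖ ^ 2 := by
        rw [norm_toLp_sq hs0, ← Real.rpow_add_one' (by positivity)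
          (by rw [sub_add_cancel]; positivity), sub_add_cancel]

lemma norm_toLp_col_mul_mul_conjTranspose_le {p : ℝ≥0∞} [Fact (1 ≤ p)] (K : Matrix R I ℂ)
    (A : Matrix I I ℂ) (b : R) :
    ‖WithLp.toLp p ((K * A * Kᴴ).col b)‖ ≤ ∑ j, ‖K b j‖ * ‖WithLp.toLp p (K *ᵥ A.col j)‖ := by
  rw [col_mul_mul_conjTranspose, WithLp.toLp_sum]
  refine (norm_sum_le _ _).trans_eq ?_
  simp [norm_smul]

theorem sum_norm_col_mul_norm_toLp_mulVec_le [DecidableEq I] {p : ℝ≥0∞} [Fact (1 ≤ p)]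
    (hp2 : p ≤ 2) (K : ι → Matrix R I ℂ) (hK : ∑ k, (K k)ᴴ * K k = 1)
    (hsparse : ∀ k i a b, K k a i ≠ 0 → K k b i ≠ 0 → a = b) (j : I) (x : I → ℂ) :
    ∑ k, (∑ b, ‖K k b j‖) * ‖WithLp.toLp p (K k *ᵥ x)‖ ≤ ‖WithLp.toLp p x‖ := by
  have hw : ∑ k, (∑ b, ‖K k b j‖) ^ 2 = 1 := by
    simp_rw [sq_sum_eq_sum_sq fun a b ha hb =>
      hsparse _ j a b (norm_ne_zero_iff.1 ha) (norm_ne_zero_iff.1 hb)]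
    have hsingle : ∑ i, ‖(Pi.single j 1 : I → ℂ) i‖ ^ 2 = 1 := by
      rw [sum_eq_single j (fun i _ hij => by simp [hij]) (by simp)]
      simp
    simpa [mulVec_single_one, hsingle] using sum_sum_norm_mulVec_sq K hK (Pi.single j 1)
  refine le_of_pow_le_pow_left₀ two_ne_zero (norm_nonneg _) ?_
  calc (∑ k, (∑ b, ‖K k b j‖) * ‖WithLp.toLp p (K k *ᵥ x)‖) ^ 2
      ≤ (∑ k, (∑ b, ‖K k b j‖) ^ 2) * ∑ k, ‖WithLp.toLp p (K k *ᵥ x)‖ ^ 2 :=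
        sum_mul_sq_le_sq_mul_sq _ _ _
    _ ≤ ‖WithLp.toLp p x‖ ^ 2 := by
        rw [hw, one_mul]
        exact sum_norm_toLp_mulVec_sq_le (zero_lt_one.trans_le Fact.out) hp2 K hK hsparse x

end Kraus

lemma IsIncoherentKraus.eq_of_ne_zero {m n r : ℕ} {K : Fin r → Matrix (Fin m) (Fin n) ℂ}
    (hK : IsIncoherentKraus K) (k : Fin r) (i : Fin n) (a b : Fin m)
    (ha : K k a i ≠ 0) (hb : K k b i ≠ 0) : a = b := by
  have hσ : IsIncoherentState (diagonal (Pi.single i 1)) := by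
    refine ⟨⟨posSemidef_diagonal_iff.2 fun j => ?_, by simp [trace_diagonal]⟩, isDiag_diagonal _⟩
    rcases eq_or_ne j i with rfl | h <;> simp [*]
  by_contra hab
  have := hK.2 k _ hσ hab
  simp [Matrix.mul_apply, diagonal, Pi.single_apply, ha, hb] at this

/-- Proposition on contraction: for `p ∈ [1,2]` and a set of incoherent
Kraus operators `K₁,…,K_m ∈ M_{N,n}(ℂ)`, `∑ₖ ℓ_{1,p}(Kₖ A Kₖ†) ≤ ℓ_{1,p}(A)` for all
`A ∈ M_n(ℂ)`. -/
theorem sum_lqp_kraus_le (p : ℝ≥0∞) (hp1 : 1 ≤ p) (hp2 : p ≤ 2) (N n m : ℕ)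
    (K : Fin m → Matrix (Fin N) (Fin n) ℂ) (hK : IsIncoherentKraus K)
    (A : Matrix (Fin n) (Fin n) ℂ) :
    ∑ k, lqp 1 p (K k * A * (K k)ᴴ) ≤ lqp 1 p A := by
  have : Fact (1 ≤ p) := ⟨hp1⟩
  simp only [lqp_one_eq_sum]
  calc ∑ k, ∑ b, ‖WithLp.toLp p ((K k * A * (K k)ᴴ).col b)‖
      ≤ ∑ k, ∑ b, ∑ j, ‖K k b j‖ * ‖WithLp.toLp p (K k *ᵥ A.col j)‖ := by
        gcongr with k _ b _
        exact norm_toLp_col_mul_mul_conjTranspose_le _ _ _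
    _ = ∑ j, ∑ k, (∑ b, ‖K k b j‖) * ‖WithLp.toLp p (K k *ᵥ A.col j)‖ := by
        simp only [sum_mul]
        rw [sum_congr rfl fun k _ => Finset.sum_comm]
        exact Finset.sum_comm
    _ ≤ ∑ j, ‖WithLp.toLp p (A.col j)‖ := by
        gcongr with j _
        exact sum_norm_col_mul_norm_toLp_mulVec_le hp2 K hK.1 hK.eq_of_ne_zero j _
end
end
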